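/- Let Γ be a countable discrete group acting on a Hilbert space H via a dual integrable representation T, ψ ∈ H and 0 < A ≤ B < ∞. Then {T(γ)ψ}_{γ∈Γ} is a Riesz basis for the cyclic space ⟨ψ⟩ with constants A, B if and only if A·1 ≤ [ψ,ψ] ≤ B·1 as operators. -/

import Mathlib

noncomputable section
open scoped ENNReal ComplexConjugate

/-- The pairing `⟪u, f⟫ = ∑ conj (u γ) * f γ` of a finitely supported vector against an
arbitrary function; this is the inner product of `ℓ²(Γ)` extended to pointwise-defined
vectors. -/
noncomputable def pairF {Γ : Type*} (u : Γ →₀ ℂ) (f : Γ → ℂ) : ℂ :=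
  u.sum fun γ c => conj c * f γ

/-- Elements of the noncommutative `Lᵖ` spaces over `vNa(Γ)` are densely defined operators
on `ℓ²(Γ)`, defined (weakly) on the dense subspace of finitely supported vectors, which are
affiliated to `vNa(Γ)`, i.e. commute with the right regular representation
`ρ(γ) δ_{γ'} = δ_{γ' γ}`. -/
def Affiliated {Γ : Type*} [Group Γ] (F : (Γ →₀ ℂ) →ₗ[ℂ] (Γ → ℂ)) : Prop :=
  ∀ (γ : Γ) (u : Γ →₀ ℂ) (x : Γ),
    F (Finsupp.mapDomain (fun y => y * γ) u) x = F u (x * γ⁻¹)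

/-- Membership in `L¹(vNa(Γ))`: since `L¹ = L² · L²`, an affiliated operator is in `L¹`
iff its Fourier coefficient function `γ ↦ (F δₑ)(γ)` is the convolution of two square
summable kernels. -/
def MemL1 {Γ : Type*} [Group Γ] (F : (Γ →₀ ℂ) →ₗ[ℂ] (Γ → ℂ)) : Prop :=
  ∃ g h : Γ → ℂ, Memℓp g 2 ∧ Memℓp h 2 ∧
    ∀ γ : Γ, F (Finsupp.single 1 1) γ = ∑' y, g y * h (y⁻¹ * γ)

/-- Let `Γ` act on `H` via a dual integrable representation `T`, let
`ψ ∈ H` and `0 < A ≤ B < ∞`.  Then `{T(γ)ψ}_{γ ∈ Γ}` is a Riesz basis of the cyclic space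
`⟨ψ⟩` with constants `A, B` if and only if `A·1 ≤ [ψ,ψ] ≤ B·1` as operators (tested
against the dense subspace of finitely supported vectors of `ℓ²(Γ)`). -/
theorem riesz_basis_iff_bracket_bounds {Γ : Type*} [Group Γ] [Countable Γ]
    {H : Type*} [NormedAddCommGroup H] [InnerProductSpace ℂ H] [CompleteSpace H]
    (T : Γ →* (H ≃ₗᵢ[ℂ] H))
    (br : H → H → ((Γ →₀ ℂ) →ₗ[ℂ] (Γ → ℂ)))
    (haff : ∀ φ ψ : H, Affiliated (br φ ψ))
    (hL1 : ∀ φ ψ : H, MemL1 (br φ ψ))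
    (hdual : ∀ (φ ψ : H) (γ : Γ), (inner ℂ ((T γ) ψ) φ : ℂ) = br φ ψ (Finsupp.single 1 1) γ) (ψ : H) (A B : ℝ) (hA : 0 < A) (hAB : A ≤ B) :
    (∀ u : Γ →₀ ℂ,
        A * (u.sum fun _ c => ‖c‖ ^ 2) ≤ ‖u.sum fun γ c => c • ((T γ) ψ)‖ ^ 2 ∧
        ‖u.sum fun γ c => c • ((T γ) ψ)‖ ^ 2 ≤ B * (u.sum fun _ c => ‖c‖ ^ 2))
      ↔ (∀ u : Γ →₀ ℂ,
          (pairF u (br ψ ψ u)).im = 0 ∧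
          A * (u.sum fun _ c => ‖c‖ ^ 2) ≤ (pairF u (br ψ ψ u)).re ∧
          (pairF u (br ψ ψ u)).re ≤ B * (u.sum fun _ c => ‖c‖ ^ 2)) := by
  classical
  have hTmul : ∀ (a b : Γ) (v : H), (T (a * b)) v = (T a) ((T b) v) := by
    intro a b v; rw [map_mul]; rfl
  -- bracket on singles
  have hsingle : ∀ (γ x : Γ), br ψ ψ (Finsupp.single γ 1) x
      = (inner ℂ ((T (x * γ⁻¹)) ψ) ψ : ℂ) := by
    intro γ x
    have h1 : Finsupp.mapDomain (fun y => y * γ) (Finsupp.single (1 : Γ) (1 : ℂ))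
        = Finsupp.single γ 1 := by
      rw [Finsupp.mapDomain_single, one_mul]
    have h2 := haff ψ ψ γ (Finsupp.single 1 1) x
    rw [h1] at h2
    rw [h2, ← hdual ψ ψ (x * γ⁻¹)]
  have hinner : ∀ (γ x : Γ),
      (inner ℂ ((T (x * γ⁻¹)) ψ) ψ : ℂ) = inner ℂ ((T γ⁻¹) ψ) ((T x⁻¹) ψ) := by
    intro γ x
    have h1 := (T x⁻¹).inner_map_map ((T (x * γ⁻¹)) ψ) ψ
    rw [← h1, ← hTmul]
    congr 2
    group
  -- bracket formula
  have hbr : ∀ (u : Γ →₀ ℂ) (x : Γ),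
      br ψ ψ u x = ∑ γ ∈ u.support, u γ * inner ℂ ((T γ⁻¹) ψ) ((T x⁻¹) ψ) := by
    intro u x
    conv_lhs => rw [← Finsupp.sum_single u, map_finsuppSum]
    rw [Finsupp.sum, Finset.sum_apply]
    refine Finset.sum_congr rfl fun γ _ => ?_
    have h3 : Finsupp.single γ (u γ) = (u γ) • Finsupp.single γ (1 : ℂ) := by
      rw [Finsupp.smul_single, smul_eq_mul, mul_one]
    rw [h3, map_smul]
    simp only [Pi.smul_apply, smul_eq_mul]
    rw [hsingle, hinner]
  set w : (Γ →₀ ℂ) → H := fun u => u.sum fun γ c => (conj c) • ((T γ⁻¹) ψ) with hw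
  have hbrw : ∀ (u : Γ →₀ ℂ) (x : Γ), br ψ ψ u x = inner ℂ (w u) ((T x⁻¹) ψ) := by
    intro u x
    rw [hbr, hw]
    simp only []
    rw [Finsupp.sum, sum_inner]
    refine Finset.sum_congr rfl fun γ _ => ?_
    rw [inner_smul_left]
    simp
  -- key identity
  have hkey : ∀ u : Γ →₀ ℂ, pairF u (br ψ ψ u) = ((‖w u‖ ^ 2 : ℝ) : ℂ) := by
    intro u
    have h4 : pairF u (br ψ ψ u) = (inner ℂ (w u) (w u) : ℂ) := by
      unfold pairF
      conv_rhs => rw [hw]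
      simp only [Finsupp.sum]
      rw [inner_sum]
      refine Finset.sum_congr rfl fun γ _ => ?_
      rw [hbrw, inner_smul_right]; rfl
    rw [h4, inner_self_eq_norm_sq_to_K]
    norm_cast
  -- the involution u ↦ us u
  set us : (Γ →₀ ℂ) → (Γ →₀ ℂ) := fun u =>
    Finsupp.mapDomain (fun γ : Γ => γ⁻¹)
      (Finsupp.mapRange (starRingEnd ℂ) (map_zero _) u) with hus
  have husS : ∀ u : Γ →₀ ℂ, ((us u).sum fun γ c => c • ((T γ) ψ)) = w u := by
    intro u
    rw [hus, hw]
    simp only []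
    rw [Finsupp.sum_mapDomain_index_inj inv_injective, Finsupp.sum_mapRange_index]
    intro γ; simp
  have husW : ∀ u : Γ →₀ ℂ, w (us u) = u.sum fun γ c => c • ((T γ) ψ) := by
    intro u
    rw [hus, hw]
    simp only []
    rw [Finsupp.sum_mapDomain_index_inj inv_injective, Finsupp.sum_mapRange_index]
    · simp
    · intro γ; simp
  have husN : ∀ u : Γ →₀ ℂ, ((us u).sum fun _ c => ‖c‖ ^ 2) = u.sum fun _ c => ‖c‖ ^ 2 := by
    intro u
    rw [hus]
    simp only []
    rw [Finsupp.sum_mapDomain_index_inj inv_injective, Finsupp.sum_mapRange_index]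
    · simp
    · intro γ; simp
  constructor
  · intro h u
    have hk := hkey u
    have hb := h (us u)
    rw [husS u, husN u] at hb
    refine ⟨by rw [hk]; exact Complex.ofReal_im _, ?_, ?_⟩
    · rw [hk, Complex.ofReal_re]; exact hb.1
    · rw [hk, Complex.ofReal_re]; exact hb.2
  · intro h u
    have hb := h (us u)
    have hk := hkey (us u)
    rw [husW u] at hk
    rw [husN u, hk] at hb
    simp only [Complex.ofReal_re] at hb
    exact ⟨hb.2.1, hb.2.2⟩
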